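/- There exist polynomials p and q such that every minimal derivation of a sequent of size n has depth at most p(n), and every sequent occurring in it has size at most q(n). Concretely, along any branch of a minimal derivation the antecedent sets grow monotonically, sequents on a branch are pairwise distinct and built from the O(n) subformulas of the end-sequent together with ⊥ and K⊥, so the branch length is O(n²) and each sequent has size O(n²). -/

import Mathlib

inductive Fm : Type
  | var : ℕ → Fm
  | bot : Fm
  | and : Fm → Fm → Fm
  | or  : Fm → Fm → Fm
  | imp : Fm → Fm → Fm
  | K   : Fm → Fm
deriving DecidableEq

/-- ¬F abbreviates F → ⊥. -/
def Fm.neg (F : Fm) : Fm := F.imp .bot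

/-- A is a propositional variable or ⊥. -/
def Fm.isAtom (A : Fm) : Prop := A = Fm.bot ∨ ∃ n, A = Fm.var n

/-- K applied to each member of a multiset. -/
def Kset (Γ : Multiset Fm) : Multiset Fm := Γ.map Fm.K
/-- Depth-indexed calculus IELG⁺⁺, parametrized by a constraint `ok` relating the
antecedent of the conclusion to the antecedent of each premise (used to express
monotonicity of rule instances) and a constraint `good` on each sequent of the
derivation (every sequent in a derivation is the conclusion of a rule or an axiom). -/
inductive GPP (ok : Multiset Fm → Multiset Fm → Prop)
    (good : Multiset Fm → Fm → Prop) : ℕ → Multiset Fm → Fm → Prop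
  | ax (n : ℕ) (Γ : Multiset Fm) (A : Fm) :
      A.isAtom → good (A ::ₘ Γ) A → GPP ok good n (A ::ₘ Γ) A
  | con (n : ℕ) (Γ Δ : Multiset Fm) (G : Fm) :
      ok (Γ + Δ) (Γ + Δ + Δ) → good (Γ + Δ) G →
      GPP ok good n (Γ + Δ + Δ) G → GPP ok good (n+1) (Γ + Δ) G
  | andL (n : ℕ) (Γ : Multiset Fm) (F G H : Fm) :
      ok (F.and G ::ₘ Γ) (F ::ₘ G ::ₘ Γ) → good (F.and G ::ₘ Γ) H →
      GPP ok good n (F ::ₘ G ::ₘ Γ) H → GPP ok good (n+1) (F.and G ::ₘ Γ) H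
  | andR (n : ℕ) (Γ : Multiset Fm) (F G : Fm) :
      ok Γ Γ → good Γ (F.and G) →
      GPP ok good n Γ F → GPP ok good n Γ G → GPP ok good (n+1) Γ (F.and G)
  | orL (n : ℕ) (Γ : Multiset Fm) (F G H : Fm) :
      ok (F.or G ::ₘ Γ) (F ::ₘ Γ) → ok (F.or G ::ₘ Γ) (G ::ₘ Γ) →
      good (F.or G ::ₘ Γ) H →
      GPP ok good n (F ::ₘ Γ) H → GPP ok good n (G ::ₘ Γ) H →
      GPP ok good (n+1) (F.or G ::ₘ Γ) H
  | orR1 (n : ℕ) (Γ : Multiset Fm) (F G : Fm) :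
      ok Γ Γ → good Γ (F.or G) → GPP ok good n Γ F → GPP ok good (n+1) Γ (F.or G)
  | orR2 (n : ℕ) (Γ : Multiset Fm) (F G : Fm) :
      ok Γ Γ → good Γ (F.or G) → GPP ok good n Γ G → GPP ok good (n+1) Γ (F.or G)
  | impL (n : ℕ) (Γ : Multiset Fm) (F G H : Fm) :
      ok (F.imp G ::ₘ Γ) (F.imp G ::ₘ Γ) → ok (F.imp G ::ₘ Γ) (G ::ₘ Γ) →
      good (F.imp G ::ₘ Γ) H →
      GPP ok good n (F.imp G ::ₘ Γ) F → GPP ok good n (G ::ₘ Γ) H →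
      GPP ok good (n+1) (F.imp G ::ₘ Γ) H
  | impR (n : ℕ) (Γ : Multiset Fm) (F G : Fm) :
      ok Γ (F ::ₘ Γ) → good Γ (F.imp G) →
      GPP ok good n (F ::ₘ Γ) G → GPP ok good (n+1) Γ (F.imp G)
  | KI1 (n : ℕ) (Γ Δ : Multiset Fm) (F : Fm) :
      (∀ G, Fm.K G ∉ Γ) →
      ok (Γ + Kset Δ) (Γ + Kset Δ + Δ) → good (Γ + Kset Δ) (Fm.K F) →
      GPP ok good n (Γ + Kset Δ + Δ) F → GPP ok good (n+1) (Γ + Kset Δ) (Fm.K F)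
  | U (n : ℕ) (Γ : Multiset Fm) (F : Fm) :
      ok Γ Γ → good Γ F →
      GPP ok good n Γ (Fm.K Fm.bot) → GPP ok good (n+1) Γ F
  | andC1 (n : ℕ) (Γ : Multiset Fm) (F G H : Fm) :
      ok (F.and G ::ₘ F ::ₘ Γ) (F.and G ::ₘ F ::ₘ G ::ₘ Γ) →
      good (F.and G ::ₘ F ::ₘ Γ) H →
      GPP ok good n (F.and G ::ₘ F ::ₘ G ::ₘ Γ) H →
      GPP ok good (n+1) (F.and G ::ₘ F ::ₘ Γ) H
  | andC2 (n : ℕ) (Γ : Multiset Fm) (F G H : Fm) :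
      ok (F.and G ::ₘ G ::ₘ Γ) (F.and G ::ₘ F ::ₘ G ::ₘ Γ) →
      good (F.and G ::ₘ G ::ₘ Γ) H →
      GPP ok good n (F.and G ::ₘ F ::ₘ G ::ₘ Γ) H →
      GPP ok good (n+1) (F.and G ::ₘ G ::ₘ Γ) H
  | andC (n : ℕ) (Γ : Multiset Fm) (F G H : Fm) :
      ok (F.and G ::ₘ Γ) (F.and G ::ₘ F ::ₘ G ::ₘ Γ) →
      good (F.and G ::ₘ Γ) H →
      GPP ok good n (F.and G ::ₘ F ::ₘ G ::ₘ Γ) H →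
      GPP ok good (n+1) (F.and G ::ₘ Γ) H
  | orC (n : ℕ) (Γ : Multiset Fm) (F G H : Fm) :
      ok (F.or G ::ₘ Γ) (F.or G ::ₘ F ::ₘ Γ) → ok (F.or G ::ₘ Γ) (F.or G ::ₘ G ::ₘ Γ) →
      good (F.or G ::ₘ Γ) H →
      GPP ok good n (F.or G ::ₘ F ::ₘ Γ) H → GPP ok good n (F.or G ::ₘ G ::ₘ Γ) H →
      GPP ok good (n+1) (F.or G ::ₘ Γ) H
  | impRW (n : ℕ) (Γ : Multiset Fm) (F G : Fm) :
      ok (F ::ₘ Γ) (F ::ₘ Γ) → good (F ::ₘ Γ) (F.imp G) →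
      GPP ok good n (F ::ₘ Γ) G → GPP ok good (n+1) (F ::ₘ Γ) (F.imp G)
  | impC (n : ℕ) (Γ : Multiset Fm) (F G H : Fm) :
      ok (F.imp G ::ₘ Γ) (F.imp G ::ₘ Γ) → ok (F.imp G ::ₘ Γ) (F.imp G ::ₘ G ::ₘ Γ) →
      good (F.imp G ::ₘ Γ) H →
      GPP ok good n (F.imp G ::ₘ Γ) F → GPP ok good n (F.imp G ::ₘ G ::ₘ Γ) H →
      GPP ok good (n+1) (F.imp G ::ₘ Γ) H
  | KI1W (n : ℕ) (Γ Δ₁ Δ₂ : Multiset Fm) (F : Fm) :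
      (∀ G, Fm.K G ∉ Γ + Δ₁) →
      ok (Γ + Δ₁ + Kset (Δ₁ + Δ₂)) (Γ + Kset (Δ₁ + Δ₂) + Δ₁ + Δ₂) →
      good (Γ + Δ₁ + Kset (Δ₁ + Δ₂)) (Fm.K F) →
      GPP ok good n (Γ + Kset (Δ₁ + Δ₂) + Δ₁ + Δ₂) F →
      GPP ok good (n+1) (Γ + Δ₁ + Kset (Δ₁ + Δ₂)) (Fm.K F)

/-- IELG⁺⁺-provability with depth at most n (no constraints). -/
def IELGpp (n : ℕ) (Γ : Multiset Fm) (F : Fm) : Prop :=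
  GPP (fun _ _ => True) (fun _ _ => True) n Γ F

/-- A rule instance is monotone if the set of antecedent formulas of the
conclusion is contained in that of each premise. -/
def monoOK (c p : Multiset Fm) : Prop := c.toFinset ⊆ p.toFinset

/-- Monotone IELG⁺⁺-derivations: every rule instance is monotone. -/
def IELGppMono (n : ℕ) (Γ : Multiset Fm) (F : Fm) : Prop :=
  GPP monoOK (fun _ _ => True) n Γ F

/-- Monotone IELG⁺⁺-derivations in which every sequent has a duplicate-free
antecedent (the form of "minimal" derivations, apart from depth minimality). -/
def IELGppMonoSet (n : ℕ) (Γ : Multiset Fm) (F : Fm) : Prop :=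
  GPP monoOK (fun Γ' _ => Γ'.Nodup) n Γ F

/-- The length of a formula. -/
def Fm.len : Fm → ℕ
  | Fm.var _ => 1
  | Fm.bot => 1
  | Fm.and F G => F.len + G.len + 1
  | Fm.or F G => F.len + G.len + 1
  | Fm.imp F G => F.len + G.len + 1
  | Fm.K F => F.len + 1

/-- The size of a sequent: the sum of the lengths of all its formulas. -/
def seqSize (Γ : Multiset Fm) (F : Fm) : ℕ := (Γ.map Fm.len).sum + F.len

/-!
Every rule of IELG⁺⁺ has its premises built from subformulas of its conclusion and `K⊥`, so a
derivation of `Γ ⇒ F` lives over the set `S` of subformulas of `Γ`, `F`, `K⊥`, with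
`|S| ≤ n + 2` and every member of length `≤ n + 2`; a duplicate-free sequent over `S` then has
size at most `(|S| + 1)(n + 2)`.

For the depth: a sequent of minimal depth `k + 1` has a premise of minimal depth `k` whose
antecedent set contains its own. Iterating gives a branch along which the minimal depth
strictly decreases and the antecedent sets increase, so a sequent on it is determined by the
pair (cardinality of its antecedent set, succedent) and no pair repeats. There are at most
`(|S| + 1)|S|` such pairs, whence `k < (|S| + 1)|S| = O(n²)`.
-/

namespace Fm

def sub : Fm → Finset Fm
  | var n => {var n}
  | bot => {bot}
  | and F G => insert (and F G) (F.sub ∪ G.sub)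
  | or F G => insert (or F G) (F.sub ∪ G.sub)
  | imp F G => insert (imp F G) (F.sub ∪ G.sub)
  | K F => insert (K F) F.sub

theorem mem_sub_self (F : Fm) : F ∈ F.sub := by
  cases F <;> simp [sub]

theorem card_sub_le (F : Fm) : F.sub.card ≤ F.len := by
  induction F with
  | var | bot => simp [sub, len]
  | and F G ihF ihG | or F G ihF ihG | imp F G ihF ihG =>
    grw [sub, Finset.card_insert_le, Finset.card_union_le, ihF, ihG, len]
  | K F ihF => grw [sub, Finset.card_insert_le, ihF, len]

theorem len_le_of_mem_sub {F H : Fm} (h : H ∈ F.sub) : H.len ≤ F.len := by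
  induction F with
  | var | bot => simp_all [sub]
  | and F G ihF ihG | or F G ihF ihG | imp F G ihF ihG =>
    simp only [sub, Finset.mem_insert, Finset.mem_union] at h
    rcases h with rfl | h | h
    · rfl
    · grw [ihF h, len]; omega
    · grw [ihG h, len]; omega
  | K F ihF =>
    simp only [sub, Finset.mem_insert] at h
    rcases h with rfl | h
    · rfl
    · grw [ihF h, len]; omega

theorem sub_subset_of_mem_sub {F H : Fm} (h : H ∈ F.sub) : H.sub ⊆ F.sub := by
  induction F with
  | var | bot => simp_all [sub]
  | and F G ihF ihG | or F G ihF ihG | imp F G ihF ihG =>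
    simp only [sub, Finset.mem_insert, Finset.mem_union] at h
    rcases h with rfl | h | h
    · rfl
    · exact (ihF h).trans (Finset.subset_union_left.trans (Finset.subset_insert _ _))
    · exact (ihG h).trans (Finset.subset_union_right.trans (Finset.subset_insert _ _))
  | K F ihF =>
    simp only [sub, Finset.mem_insert] at h
    rcases h with rfl | h
    · rfl
    · exact (ihF h).trans (Finset.subset_insert _ _)

end Fm

/-- The rules of `GPP` other than the axiom, as data: conclusion `Γ ⇒ E` and premises `P`,
without the side conditions `ok` and `good`. -/
inductive IsRule : Multiset Fm → Fm → List (Multiset Fm × Fm) → Prop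
  | con (Γ Δ : Multiset Fm) (G : Fm) : IsRule (Γ + Δ) G [(Γ + Δ + Δ, G)]
  | andL (Γ : Multiset Fm) (F G H : Fm) : IsRule (F.and G ::ₘ Γ) H [(F ::ₘ G ::ₘ Γ, H)]
  | andR (Γ : Multiset Fm) (F G : Fm) : IsRule Γ (F.and G) [(Γ, F), (Γ, G)]
  | orL (Γ : Multiset Fm) (F G H : Fm) : IsRule (F.or G ::ₘ Γ) H [(F ::ₘ Γ, H), (G ::ₘ Γ, H)]
  | orR1 (Γ : Multiset Fm) (F G : Fm) : IsRule Γ (F.or G) [(Γ, F)]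
  | orR2 (Γ : Multiset Fm) (F G : Fm) : IsRule Γ (F.or G) [(Γ, G)]
  | impL (Γ : Multiset Fm) (F G H : Fm) :
      IsRule (F.imp G ::ₘ Γ) H [(F.imp G ::ₘ Γ, F), (G ::ₘ Γ, H)]
  | impR (Γ : Multiset Fm) (F G : Fm) : IsRule Γ (F.imp G) [(F ::ₘ Γ, G)]
  | KI1 (Γ Δ : Multiset Fm) (F : Fm) :
      (∀ G, Fm.K G ∉ Γ) → IsRule (Γ + Kset Δ) (Fm.K F) [(Γ + Kset Δ + Δ, F)]
  | U (Γ : Multiset Fm) (F : Fm) : IsRule Γ F [(Γ, Fm.K Fm.bot)]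
  | andC1 (Γ : Multiset Fm) (F G H : Fm) :
      IsRule (F.and G ::ₘ F ::ₘ Γ) H [(F.and G ::ₘ F ::ₘ G ::ₘ Γ, H)]
  | andC2 (Γ : Multiset Fm) (F G H : Fm) :
      IsRule (F.and G ::ₘ G ::ₘ Γ) H [(F.and G ::ₘ F ::ₘ G ::ₘ Γ, H)]
  | andC (Γ : Multiset Fm) (F G H : Fm) :
      IsRule (F.and G ::ₘ Γ) H [(F.and G ::ₘ F ::ₘ G ::ₘ Γ, H)]
  | orC (Γ : Multiset Fm) (F G H : Fm) :
      IsRule (F.or G ::ₘ Γ) H [(F.or G ::ₘ F ::ₘ Γ, H), (F.or G ::ₘ G ::ₘ Γ, H)]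
  | impRW (Γ : Multiset Fm) (F G : Fm) : IsRule (F ::ₘ Γ) (F.imp G) [(F ::ₘ Γ, G)]
  | impC (Γ : Multiset Fm) (F G H : Fm) :
      IsRule (F.imp G ::ₘ Γ) H [(F.imp G ::ₘ Γ, F), (F.imp G ::ₘ G ::ₘ Γ, H)]
  | KI1W (Γ Δ₁ Δ₂ : Multiset Fm) (F : Fm) :
      (∀ G, Fm.K G ∉ Γ + Δ₁) →
      IsRule (Γ + Δ₁ + Kset (Δ₁ + Δ₂)) (Fm.K F) [(Γ + Kset (Δ₁ + Δ₂) + Δ₁ + Δ₂, F)]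

theorem IsRule.ne_nil {Γ : Multiset Fm} {E : Fm} {P : List (Multiset Fm × Fm)}
    (h : IsRule Γ E P) : P ≠ [] := by
  cases h <;> simp

namespace GPP

variable {ok : Multiset Fm → Multiset Fm → Prop} {good : Multiset Fm → Fm → Prop}
  {m n : ℕ} {Γ : Multiset Fm} {E : Fm}

theorem good_of (h : GPP ok good m Γ E) : good Γ E := by
  cases h <;> assumption

theorem of_axiom (hA : E.isAtom) (hE : E ∈ Γ) (hg : good Γ E) : GPP ok good m Γ E := by
  obtain ⟨Γ', rfl⟩ := Multiset.exists_cons_of_mem hE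
  exact .ax m Γ' E hA hg

theorem of_isRule {P : List (Multiset Fm × Fm)} (hR : IsRule Γ E P) (hok : ∀ Q ∈ P, ok Γ Q.1)
    (hg : good Γ E) (hP : ∀ Q ∈ P, GPP ok good n Q.1 Q.2) : GPP ok good (n + 1) Γ E := by
  cases hR <;> simp only [List.mem_cons, List.not_mem_nil, or_false, forall_eq_or_imp,
    forall_eq] at hok hP
  case con => exact .con _ _ _ _ hok hg hP
  case andL => exact .andL _ _ _ _ _ hok hg hP
  case andR => exact .andR _ _ _ _ hok.1 hg hP.1 hP.2
  case orL => exact .orL _ _ _ _ _ hok.1 hok.2 hg hP.1 hP.2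
  case orR1 => exact .orR1 _ _ _ _ hok hg hP
  case orR2 => exact .orR2 _ _ _ _ hok hg hP
  case impL => exact .impL _ _ _ _ _ hok.1 hok.2 hg hP.1 hP.2
  case impR => exact .impR _ _ _ _ hok hg hP
  case KI1 hK => exact .KI1 _ _ _ _ hK hok hg hP
  case U => exact .U _ _ _ hok hg hP
  case andC1 => exact .andC1 _ _ _ _ _ hok hg hP
  case andC2 => exact .andC2 _ _ _ _ _ hok hg hP
  case andC => exact .andC _ _ _ _ _ hok hg hP
  case orC => exact .orC _ _ _ _ _ hok.1 hok.2 hg hP.1 hP.2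
  case impRW => exact .impRW _ _ _ _ hok hg hP
  case impC => exact .impC _ _ _ _ _ hok.1 hok.2 hg hP.1 hP.2
  case KI1W hK => exact .KI1W _ _ _ _ _ hK hok hg hP

theorem axiom_or_isRule (h : GPP ok good m Γ E) :
    (E.isAtom ∧ E ∈ Γ) ∨
      ∃ n P, m = n + 1 ∧ IsRule Γ E P ∧ ∀ Q ∈ P, ok Γ Q.1 ∧ GPP ok good n Q.1 Q.2 := by
  cases h with
  | ax _ _ _ hA => exact .inl ⟨hA, Multiset.mem_cons_self _ _⟩
  | con => exact .inr ⟨_, _, rfl, .con _ _ _, by simp [*]⟩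
  | andL => exact .inr ⟨_, _, rfl, .andL _ _ _ _, by simp [*]⟩
  | andR => exact .inr ⟨_, _, rfl, .andR _ _ _, by simp [*]⟩
  | orL => exact .inr ⟨_, _, rfl, .orL _ _ _ _, by simp [*]⟩
  | orR1 => exact .inr ⟨_, _, rfl, .orR1 _ _ _, by simp [*]⟩
  | orR2 => exact .inr ⟨_, _, rfl, .orR2 _ _ _, by simp [*]⟩
  | impL => exact .inr ⟨_, _, rfl, .impL _ _ _ _, by simp [*]⟩
  | impR => exact .inr ⟨_, _, rfl, .impR _ _ _, by simp [*]⟩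
  | KI1 _ _ _ _ hK => exact .inr ⟨_, _, rfl, .KI1 _ _ _ hK, by simp [*]⟩
  | U => exact .inr ⟨_, _, rfl, .U _ _, by simp [*]⟩
  | andC1 => exact .inr ⟨_, _, rfl, .andC1 _ _ _ _, by simp [*]⟩
  | andC2 => exact .inr ⟨_, _, rfl, .andC2 _ _ _ _, by simp [*]⟩
  | andC => exact .inr ⟨_, _, rfl, .andC _ _ _ _, by simp [*]⟩
  | orC => exact .inr ⟨_, _, rfl, .orC _ _ _ _, by simp [*]⟩
  | impRW => exact .inr ⟨_, _, rfl, .impRW _ _ _, by simp [*]⟩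
  | impC => exact .inr ⟨_, _, rfl, .impC _ _ _ _, by simp [*]⟩
  | KI1W _ _ _ _ _ hK => exact .inr ⟨_, _, rfl, .KI1W _ _ _ _ hK, by simp [*]⟩

end GPP

def SubformulaClosed (T : Finset Fm) : Prop := ∀ H ∈ T, H.sub ⊆ T

def SequentOver (T : Finset Fm) (Γ : Multiset Fm) (E : Fm) : Prop := (∀ x ∈ Γ, x ∈ T) ∧ E ∈ T

theorem IsRule.sequentOver_of_mem {T : Finset Fm} (hT : SubformulaClosed T)
    (hKbot : Fm.bot.K ∈ T) {Γ : Multiset Fm} {E : Fm} {P : List (Multiset Fm × Fm)}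
    (hR : IsRule Γ E P) (hΓE : SequentOver T Γ E) {Q : Multiset Fm × Fm} (hQ : Q ∈ P) :
    SequentOver T Q.1 Q.2 := by
  have mem {F H : Fm} (hF : F ∈ T) (hH : H ∈ F.sub) : H ∈ T := hT F hF hH
  have hand {F G : Fm} (h : F.and G ∈ T) : F ∈ T ∧ G ∈ T := by
    constructor <;> exact mem h (by simp [Fm.sub, Fm.mem_sub_self])
  have hor {F G : Fm} (h : F.or G ∈ T) : F ∈ T ∧ G ∈ T := by
    constructor <;> exact mem h (by simp [Fm.sub, Fm.mem_sub_self])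
  have himp {F G : Fm} (h : F.imp G ∈ T) : F ∈ T ∧ G ∈ T := by
    constructor <;> exact mem h (by simp [Fm.sub, Fm.mem_sub_self])
  have hK {F : Fm} (h : F.K ∈ T) : F ∈ T := mem h (by simp [Fm.sub, Fm.mem_sub_self])
  obtain ⟨hΓ, hE⟩ := hΓE
  cases hR <;> simp only [List.mem_cons, List.not_mem_nil, or_false] at hQ <;>
    rcases hQ with rfl | rfl <;>
    simp only [SequentOver, Multiset.mem_cons, Multiset.mem_add, Kset, Multiset.mem_map,
      or_imp, forall_and, forall_eq, forall_exists_index, and_imp, forall_apply_eq_imp_iff₂]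
      at hΓ ⊢ <;>
    grind

namespace GPP

variable {ok : Multiset Fm → Multiset Fm → Prop} {good good' : Multiset Fm → Fm → Prop}
  {m m' : ℕ} {Γ : Multiset Fm} {E : Fm}

theorem mono_of_invariant (Inv : Multiset Fm → Fm → Prop)
    (hInv : ∀ {Γ E P}, IsRule Γ E P → Inv Γ E → ∀ Q ∈ P, Inv Q.1 Q.2)
    (hgood : ∀ Γ E, good Γ E → Inv Γ E → good' Γ E)
    (hm : m ≤ m') (h : GPP ok good m Γ E) (hI : Inv Γ E) : GPP ok good' m' Γ E := by
  induction m using Nat.strong_induction_on generalizing m' Γ E with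
  | _ m ih =>
    have hg := hgood _ _ h.good_of hI
    rcases h.axiom_or_isRule with ⟨hA, hE⟩ | ⟨n, P, rfl, hR, hP⟩
    · exact of_axiom hA hE hg
    · obtain ⟨n', rfl⟩ : ∃ n', m' = n' + 1 := ⟨m' - 1, by omega⟩
      exact of_isRule hR (fun Q hQ => (hP Q hQ).1) hg fun Q hQ =>
        ih n n.lt_succ_self (by omega) (hP Q hQ).2 (hInv hR hI Q hQ)

theorem mono (hgood : ∀ Γ E, good Γ E → good' Γ E) (hm : m ≤ m') (h : GPP ok good m Γ E) :
    GPP ok good' m' Γ E :=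
  mono_of_invariant (fun _ _ => True) (fun _ _ _ _ => trivial) (fun Γ E hg _ => hgood Γ E hg)
    hm h trivial

end GPP

def IsMinDepth (ok : Multiset Fm → Multiset Fm → Prop) (good : Multiset Fm → Fm → Prop)
    (m : ℕ) (Γ : Multiset Fm) (E : Fm) : Prop :=
  GPP ok good m Γ E ∧ ∀ m' < m, ¬ GPP ok good m' Γ E

namespace IsMinDepth

variable {ok : Multiset Fm → Multiset Fm → Prop} {good : Multiset Fm → Fm → Prop}
  {m m' : ℕ} {Γ : Multiset Fm} {E : Fm}

theorem unique (h : IsMinDepth ok good m Γ E) (h' : IsMinDepth ok good m' Γ E) : m = m' :=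
  le_antisymm (not_lt.mp fun hlt => h.2 m' hlt h'.1) (not_lt.mp fun hlt => h'.2 m hlt h.1)

theorem exists_premise {k : ℕ} (h : IsMinDepth ok good (k + 1) Γ E) :
    ∃ Q : Multiset Fm × Fm, ok Γ Q.1 ∧ IsMinDepth ok good k Q.1 Q.2 := by
  obtain ⟨hd, hmin⟩ := h
  rcases hd.axiom_or_isRule with ⟨hA, hE⟩ | ⟨n, P, hn, hR, hP⟩
  · exact absurd (GPP.of_axiom hA hE hd.good_of) (hmin 0 k.succ_pos)
  obtain rfl : k = n := by omega
  by_contra! hshallow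
  have hshallow' : ∀ Q ∈ P, ∃ j < k, GPP ok good j Q.1 Q.2 := fun Q hQ => by
    simpa [IsMinDepth, (hP Q hQ).2] using hshallow Q (hP Q hQ).1
  obtain ⟨Q₀, hQ₀⟩ := List.exists_mem_of_ne_nil P hR.ne_nil
  obtain ⟨k', rfl⟩ : ∃ k', k = k' + 1 := ⟨k - 1, by obtain ⟨j, hj, -⟩ := hshallow' Q₀ hQ₀; omega⟩
  refine hmin (k' + 1) (k' + 1).lt_succ_self ?_
  refine GPP.of_isRule hR (fun Q hQ => (hP Q hQ).1) hd.good_of fun Q hQ => ?_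
  obtain ⟨j, hj, hQj⟩ := hshallow' Q hQ
  exact hQj.mono (fun _ _ => id) (by omega)

end IsMinDepth

def SetSequentOver (S : Finset Fm) (Γ : Multiset Fm) (E : Fm) : Prop :=
  Γ.Nodup ∧ SequentOver S Γ E

open Classical in
/-- A sequent `Γ' ⇒ G` above `Γ` is recorded only by `(|set Γ'|, G)`: the antecedent sets met
along a monotone branch form a chain, so on a branch the cardinality determines the set. -/
noncomputable def reach (S : Finset Fm) (Γ : Multiset Fm) (k : ℕ) : Finset (ℕ × Fm) :=
  (Finset.range (S.card + 1) ×ˢ S).filter fun cG => ∃ Γ' m, monoOK Γ Γ' ∧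
    Γ'.toFinset.card = cG.1 ∧ m ≤ k ∧ IsMinDepth monoOK (SetSequentOver S) m Γ' cG.2

section reach

variable {S : Finset Fm} {Γ Γ' : Multiset Fm} {E : Fm} {k : ℕ}

theorem card_reach_le : (reach S Γ k).card ≤ (S.card + 1) * S.card := by
  unfold reach
  grw [Finset.card_filter_le, Finset.card_product, Finset.card_range]

theorem reach_mono (hΓ : monoOK Γ Γ') {k' : ℕ} (hk : k ≤ k') : reach S Γ' k ⊆ reach S Γ k' := by
  unfold reach
  intro cG
  simp only [Finset.mem_filter]
  rintro ⟨hcG, Γ'', m, hΓ'', hcard, hm, hmin⟩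
  exact ⟨hcG, Γ'', m, hΓ.trans hΓ'', hcard, hm.trans hk, hmin⟩

theorem mem_reach_self (h : IsMinDepth monoOK (SetSequentOver S) k Γ E) :
    (Γ.toFinset.card, E) ∈ reach S Γ k := by
  obtain ⟨-, hΓS, hES⟩ := h.1.good_of
  have hcard : Γ.toFinset.card ≤ S.card :=
    Finset.card_le_card fun x hx => hΓS x (Multiset.mem_toFinset.mp hx)
  simp only [reach, Finset.mem_filter, Finset.mem_product, Finset.mem_range]
  exact ⟨⟨by omega, hES⟩, Γ, k, subset_rfl, rfl, le_rfl, h⟩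

theorem not_mem_reach (h : IsMinDepth monoOK (SetSequentOver S) (k + 1) Γ E)
    (hΓ : monoOK Γ Γ') : (Γ.toFinset.card, E) ∉ reach S Γ' k := by
  simp only [reach, Finset.mem_filter]
  rintro ⟨-, Γ'', m, hΓ'', hcard, hm, hmin⟩
  have hsets : Γ.toFinset = Γ''.toFinset :=
    Finset.eq_of_subset_of_card_le (hΓ.trans hΓ'') hcard.le
  obtain rfl : Γ = Γ'' := Multiset.Nodup.toFinset_inj h.1.good_of.1 hmin.1.good_of.1 hsets
  have := h.unique hmin
  omega

theorem lt_card_reach (h : IsMinDepth monoOK (SetSequentOver S) k Γ E) :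
    k < (reach S Γ k).card := by
  induction k generalizing Γ E with
  | zero => exact Finset.card_pos.mpr ⟨_, mem_reach_self h⟩
  | succ k ih =>
    obtain ⟨Q, hΓQ, hQ⟩ := h.exists_premise
    have hsub : reach S Q.1 k ⊂ reach S Γ (k + 1) :=
      Finset.ssubset_iff_subset_ne.mpr ⟨reach_mono hΓQ k.le_succ,
        fun heq => not_mem_reach h hΓQ (heq ▸ mem_reach_self h)⟩
    exact (ih hQ).succ_le.trans_lt (Finset.card_lt_card hsub)

end reach

theorem IsMinDepth.lt_of_setSequentOver {S : Finset Fm} {k : ℕ} {Γ : Multiset Fm} {E : Fm}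
    (h : IsMinDepth monoOK (SetSequentOver S) k Γ E) : k < (S.card + 1) * S.card :=
  (lt_card_reach h).trans_le card_reach_le

def subformulaClosure (Φ : Multiset Fm) : Finset Fm := Φ.toFinset.biUnion Fm.sub

section subformulaClosure

variable {Φ : Multiset Fm}

theorem subformulaClosed_subformulaClosure : SubformulaClosed (subformulaClosure Φ) := by
  intro H hH
  obtain ⟨F, hF, hHF⟩ := Finset.mem_biUnion.mp hH
  exact (Fm.sub_subset_of_mem_sub hHF).trans (Finset.subset_biUnion_of_mem Fm.sub hF)

theorem mem_subformulaClosure {F : Fm} (hF : F ∈ Φ) : F ∈ subformulaClosure Φ :=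
  Finset.mem_biUnion.mpr ⟨F, Multiset.mem_toFinset.mpr hF, F.mem_sub_self⟩

theorem card_subformulaClosure_le : (subformulaClosure Φ).card ≤ (Φ.map Fm.len).sum :=
  calc (subformulaClosure Φ).card ≤ ∑ F ∈ Φ.toFinset, F.sub.card := Finset.card_biUnion_le
    _ ≤ ∑ F ∈ Φ.toFinset, F.len := Finset.sum_le_sum fun F _ => F.card_sub_le
    _ = ∑ F ∈ Φ.toFinset, 1 * F.len := by simp
    _ ≤ ∑ F ∈ Φ.toFinset, Φ.count F • F.len := Finset.sum_le_sum fun F hF =>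
        Nat.mul_le_mul_right _ (Multiset.count_pos.mpr (Multiset.mem_toFinset.mp hF))
    _ = (Φ.map Fm.len).sum := (Finset.sum_multiset_map_count Φ Fm.len).symm

theorem len_le_of_mem_subformulaClosure {H : Fm} (hH : H ∈ subformulaClosure Φ) :
    H.len ≤ (Φ.map Fm.len).sum := by
  obtain ⟨F, hF, hHF⟩ := Finset.mem_biUnion.mp hH
  exact (Fm.len_le_of_mem_sub hHF).trans
    (Multiset.le_sum_of_mem (Multiset.mem_map_of_mem _ (Multiset.mem_toFinset.mp hF)))

end subformulaClosure

theorem seqSize_le_of_setSequentOver {S : Finset Fm} {N : ℕ} (hS : ∀ H ∈ S, H.len ≤ N)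
    {Γ : Multiset Fm} {E : Fm} (h : SetSequentOver S Γ E) : seqSize Γ E ≤ (S.card + 1) * N := by
  obtain ⟨hnd, hΓ, hE⟩ := h
  have hsum : (Γ.map Fm.len).sum ≤ S.card * N :=
    calc (Γ.map Fm.len).sum = ∑ H ∈ ⟨Γ, hnd⟩, H.len := rfl
      _ ≤ ∑ H ∈ S, H.len := Finset.sum_le_sum_of_subset fun H hH => hΓ H hH
      _ ≤ S.card * N := by simpa using Finset.sum_le_card_nsmul S Fm.len N hS
  rw [seqSize, add_mul, one_mul]
  exact add_le_add hsum (hS E hE)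

/-- There are polynomials p, q such that every minimal derivation (a monotone
IELG⁺⁺-derivation with duplicate-free antecedents of minimal depth) of a
sequent of size n has depth at most p(n), and can be realized with all its
sequents of size at most q(n). -/
theorem stmt19 :
    ∃ p q : Polynomial ℕ, ∀ (Γ : Multiset Fm) (F : Fm) (m : ℕ),
      IELGppMonoSet m Γ F → (∀ m' < m, ¬ IELGppMonoSet m' Γ F) →
      m ≤ p.eval (seqSize Γ F) ∧
      GPP monoOK (fun Γ' F' => Γ'.Nodup ∧ seqSize Γ' F' ≤ q.eval (seqSize Γ F))
        m Γ F := by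
  open Polynomial in refine ⟨(X + 2) * (X + 3), (X + 2) * (X + 3), fun Γ F m hm hmin => ?_⟩
  set Φ := F ::ₘ Fm.bot.K ::ₘ Γ
  set S := subformulaClosure Φ
  have hΦ : (Φ.map Fm.len).sum = seqSize Γ F + 2 := by
    simp only [Φ, seqSize, Multiset.map_cons, Multiset.sum_cons, Fm.len]; omega
  have hcard : S.card ≤ seqSize Γ F + 2 := hΦ ▸ card_subformulaClosure_le
  have hlen : ∀ H ∈ S, H.len ≤ seqSize Γ F + 2 := fun H hH =>
    hΦ ▸ len_le_of_mem_subformulaClosure hH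
  have hS : GPP monoOK (SetSequentOver S) m Γ F :=
    hm.mono_of_invariant (SequentOver S)
      (IsRule.sequentOver_of_mem subformulaClosed_subformulaClosure
        (mem_subformulaClosure (by simp [Φ])))
      (fun _ _ => And.intro) le_rfl
      ⟨fun x hx => mem_subformulaClosure (by simp [Φ, hx]), mem_subformulaClosure (by simp [Φ])⟩
  have hSmin : IsMinDepth monoOK (SetSequentOver S) m Γ F :=
    ⟨hS, fun m' hm' h => hmin m' hm' (h.mono (fun _ _ => And.left) le_rfl)⟩
  have hsize : (S.card + 1) * (seqSize Γ F + 2) ≤ (seqSize Γ F + 2) * (seqSize Γ F + 3) := by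
    rw [mul_comm (seqSize Γ F + 2)]; exact Nat.mul_le_mul_right _ (by omega)
  have hdepth : m < (seqSize Γ F + 2) * (seqSize Γ F + 3) :=
    hSmin.lt_of_setSequentOver.trans_le ((Nat.mul_le_mul_left _ hcard).trans hsize)
  refine ⟨by simpa using hdepth.le, hS.mono (fun Γ' E h => ⟨h.1, ?_⟩) le_rfl⟩
  simpa using (seqSize_le_of_setSequentOver hlen h).trans hsize
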